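/- Let Z₂ be the perturbed Ziegler arrangement consisting of the 8 lines in ℝ² defined by y = 0, 2x + 2y + 1 = 0, 3x + y + 1 = 0, 8x − y + 4 = 0, 9x + 3y − 1 = 0, 21x − 4y + 7 = 0, 19x + 4y + 1 = 0, 10x + 10y − 5 = 0. Then: (a) every polynomial vector field (P,Q) with deg P ≤ 5 and deg Q ≤ 5 fixing every line of Z₂ is the zero vector field; and (b) there exists a nonzero polynomial vector field (P,Q) with max(deg P, deg Q) = 6 fixing every line of Z₂. -/

import Mathlib

/-!
A vector field fixing two non-parallel lines vanishes where they meet, so a field `(P, Q)`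
fixing `Z₂` vanishes at the 18 multiple points of `Z₂`. A polynomial of degree `≤ d` vanishing
at `d + 1` points of a line is divisible by that line; peeling off lines shows that a quintic
vanishing at the multiple points and at three further points is zero. Hence the quintics
vanishing at the multiple points are the combinations of three explicit products of lines
`B₁, B₂, B₃`, and once `P` and `Q` are written in this basis, tangency at six points forces all
six coefficients to vanish.

In degree `6`, the radial field centred at the triple point `(-1/2, 0)`, multiplied by the
product of the five lines missing that point, fixes every line of `Z₂`.
-/

open MvPolynomial

/-- Evaluation of a bivariate polynomial at a point of `ℝ × ℝ`
(the variable `X 0` is `x`, the variable `X 1` is `y`). -/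
noncomputable def pev (P : MvPolynomial (Fin 2) ℝ) (q : ℝ × ℝ) : ℝ :=
  MvPolynomial.eval ![q.1, q.2] P

/-- The line `{(x, y) | a * x + b * y + c = 0}`. -/
def lineSet (a b c : ℝ) : Set (ℝ × ℝ) := {q : ℝ × ℝ | a * q.1 + b * q.2 + c = 0}

/-- A subset of `ℝ²` is a line if it is the zero set of an affine form
`a * x + b * y + c` with `(a, b) ≠ (0, 0)`. -/
def IsLine (L : Set (ℝ × ℝ)) : Prop :=
  ∃ a b c : ℝ, (a, b) ≠ (0, 0) ∧ L = lineSet a b c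

/-- The line `L` is invariant by the polynomial vector field `χ = P ∂x + Q ∂y`:
for a defining affine form `a * x + b * y + c` of `L`, the polynomial
`a * P + b * Q` vanishes at every point of `L`. -/
def InvLine (P Q : MvPolynomial (Fin 2) ℝ) (L : Set (ℝ × ℝ)) : Prop :=
  ∃ a b c : ℝ, (a, b) ≠ (0, 0) ∧ L = lineSet a b c ∧
    ∀ q ∈ L, a * pev P q + b * pev Q q = 0

open scoped Classical in
/-- The Ziegler arrangement `Z₁`: the lines `y = 0`, `2x + 2y + 1 = 0`,
`3x + y + 1 = 0`, `8x - y + 4 = 0`, `9x + 3y - 1 = 0`, `9x - 2y + 3 = 0`,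
`11x + 2y + 1 = 0`, `5x + 5y - 2 = 0`. -/
noncomputable def Ziegler1 : Finset (Set (ℝ × ℝ)) :=
  {lineSet 0 1 0, lineSet 2 2 1, lineSet 3 1 1, lineSet 8 (-1) 4,
   lineSet 9 3 (-1), lineSet 9 (-2) 3, lineSet 11 2 1, lineSet 5 5 (-2)}

open scoped Classical in
/-- The perturbed Ziegler arrangement `Z₂`: the lines `y = 0`, `2x + 2y + 1 = 0`,
`3x + y + 1 = 0`, `8x - y + 4 = 0`, `9x + 3y - 1 = 0`, `21x - 4y + 7 = 0`,
`19x + 4y + 1 = 0`, `10x + 10y - 5 = 0`. -/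
noncomputable def Ziegler2 : Finset (Set (ℝ × ℝ)) :=
  {lineSet 0 1 0, lineSet 2 2 1, lineSet 3 1 1, lineSet 8 (-1) 4,
   lineSet 9 3 (-1), lineSet 21 (-4) 7, lineSet 19 4 1, lineSet 10 10 (-5)}

noncomputable def affineForm (a b c : ℝ) : MvPolynomial (Fin 2) ℝ := C a * X 0 + C b * X 1 + C c

@[simp] lemma pev_affineForm (a b c : ℝ) (q : ℝ × ℝ) :
    pev (affineForm a b c) q = a * q.1 + b * q.2 + c := by
  simp [affineForm, pev]

@[simp] lemma pev_add (F G : MvPolynomial (Fin 2) ℝ) (q : ℝ × ℝ) :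
    pev (F + G) q = pev F q + pev G q := by
  simp [pev]

@[simp] lemma pev_sub (F G : MvPolynomial (Fin 2) ℝ) (q : ℝ × ℝ) :
    pev (F - G) q = pev F q - pev G q := by
  simp [pev]

@[simp] lemma pev_mul (F G : MvPolynomial (Fin 2) ℝ) (q : ℝ × ℝ) :
    pev (F * G) q = pev F q * pev G q := by
  simp [pev]

@[simp] lemma pev_smul (u : ℝ) (F : MvPolynomial (Fin 2) ℝ) (q : ℝ × ℝ) :
    pev (u • F) q = u * pev F q := by
  simp [pev, smul_eval]

lemma totalDegree_affineForm {a b : ℝ} (hab : a ≠ 0 ∨ b ≠ 0) (c : ℝ) :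
    (affineForm a b c).totalDegree = 1 := by
  refine le_antisymm ?_ (Nat.one_le_iff_ne_zero.2 fun h => ?_)
  · refine (totalDegree_add _ _).trans (max_le ((totalDegree_add _ _).trans (max_le ?_ ?_)) ?_)
    · exact (totalDegree_mul _ _).trans (by simp)
    · exact (totalDegree_mul _ _).trans (by simp)
    · simp
  · rw [totalDegree_eq_zero_iff_eq_C] at h
    have h₀ := congrArg (pev · (0, 0)) h
    have h₁ := congrArg (pev · (1, 0)) h
    have h₂ := congrArg (pev · (0, 1)) h
    simp only [pev_affineForm] at h₀ h₁ h₂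
    simp only [pev, eval_C] at h₀ h₁ h₂
    rcases hab with hab | hab <;> apply hab <;> linarith

lemma affineForm_ne_zero {a b : ℝ} (hab : a ≠ 0 ∨ b ≠ 0) (c : ℝ) : affineForm a b c ≠ 0 := by
  intro h
  simpa [h] using totalDegree_affineForm hab c

lemma totalDegree_mul_affineForm {F : MvPolynomial (Fin 2) ℝ} (hF : F ≠ 0) {a b : ℝ}
    (hab : a ≠ 0 ∨ b ≠ 0) (c : ℝ) : (F * affineForm a b c).totalDegree = F.totalDegree + 1 := by
  rw [totalDegree_mul_of_isDomain hF (affineForm_ne_zero hab c), totalDegree_affineForm hab]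

namespace MvPolynomial

theorem X_sub_dvd_sub_aeval_update {σ R : Type*} [CommRing R] [DecidableEq σ]
    (F : MvPolynomial σ R) (i : σ) (ψ : MvPolynomial σ R) :
    X i - ψ ∣ F - aeval (Function.update X i ψ) F := by
  induction F using MvPolynomial.induction_on with
  | C a => simp [algebraMap_eq]
  | add p q hp hq => simpa [add_sub_add_comm] using dvd_add hp hq
  | mul_X p j hp =>
    have : p * X j - aeval (Function.update X i ψ) (p * X j) =
        (p - aeval (Function.update X i ψ) p) * X j +
          aeval (Function.update X i ψ) p * (X j - Function.update X i ψ j) := by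
      simp only [map_mul, aeval_X]; ring
    rw [this]
    refine dvd_add (dvd_mul_of_dvd_left hp _) (dvd_mul_of_dvd_right ?_ _)
    rcases eq_or_ne j i with rfl | h
    · simp
    · simp [Function.update_of_ne h]

theorem natDegree_aeval_le_totalDegree {σ R : Type*} [CommSemiring R] (g : σ → Polynomial R)
    (hg : ∀ i, (g i).natDegree ≤ 1) (F : MvPolynomial σ R) :
    (aeval g F).natDegree ≤ F.totalDegree := by
  classical
  conv_lhs => rw [F.as_sum, map_sum]
  refine Polynomial.natDegree_sum_le_of_forall_le _ _ fun d hd => ?_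
  rw [aeval_monomial, Polynomial.algebraMap_eq]
  refine (Polynomial.natDegree_C_mul_le _ _).trans ((Polynomial.natDegree_prod_le _ _).trans ?_)
  calc ∑ i ∈ d.support, (g i ^ d i).natDegree
      ≤ ∑ i ∈ d.support, d i := Finset.sum_le_sum fun i _ =>
        Polynomial.natDegree_pow_le.trans (by simpa using Nat.mul_le_mul_left (d i) (hg i))
    _ ≤ F.totalDegree := le_totalDegree hd

end MvPolynomial

noncomputable def restrictLine (m k : ℝ) (F : MvPolynomial (Fin 2) ℝ) : Polynomial ℝ :=
  aeval ![Polynomial.X, Polynomial.C m * Polynomial.X + Polynomial.C k] F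

lemma eval_restrictLine (m k x : ℝ) (F : MvPolynomial (Fin 2) ℝ) :
    (restrictLine m k F).eval x = pev F (x, m * x + k) := by
  rw [restrictLine, pev]
  induction F using MvPolynomial.induction_on with
  | C a => simp
  | add p q hp hq => simp [hp, hq]
  | mul_X p i hp => fin_cases i <;> simp [hp]

lemma natDegree_restrictLine_le (m k : ℝ) (F : MvPolynomial (Fin 2) ℝ) :
    (restrictLine m k F).natDegree ≤ F.totalDegree := by
  refine natDegree_aeval_le_totalDegree _ (fun i => ?_) F
  fin_cases i
  · simp
  · simpa using Polynomial.natDegree_linear_le (a := m) (b := k)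

lemma eval_aeval_update_line (m k : ℝ) (v : Fin 2 → ℝ) (F : MvPolynomial (Fin 2) ℝ) :
    eval v (aeval (Function.update X 1 (C m * X 0 + C k)) F) = pev F (v 0, m * v 0 + k) := by
  rw [pev]
  induction F using MvPolynomial.induction_on with
  | C a => simp
  | add p q hp hq => simp only [map_add, hp, hq]
  | mul_X p i hp =>
    simp only [map_mul, hp, aeval_X]
    fin_cases i <;> simp

theorem exists_eq_affineForm_mul {F : MvPolynomial (Fin 2) ℝ} {d : ℕ}
    (hF : F.totalDegree ≤ d + 1) (m k : ℝ) (s : Finset ℝ) (hs : d + 1 < s.card)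
    (h : ∀ x ∈ s, pev F (x, m * x + k) = 0) :
    ∃ G, G.totalDegree ≤ d ∧ F = affineForm (-m) 1 (-k) * G := by
  have hrestrict : restrictLine m k F = 0 :=
    Polynomial.eq_zero_of_natDegree_lt_card_of_eval_eq_zero' _ s
      (fun x hx => by rw [eval_restrictLine, h x hx])
      ((natDegree_restrictLine_le m k F).trans_lt (hF.trans_lt hs))
  have hline : aeval (Function.update X 1 (C m * X 0 + C k)) F = 0 :=
    MvPolynomial.funext fun v => by
      rw [eval_aeval_update_line, ← eval_restrictLine, hrestrict, Polynomial.eval_zero, map_zero]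
  obtain ⟨G, hG⟩ := X_sub_dvd_sub_aeval_update F 1 (C m * X 0 + C k)
  rw [hline, sub_zero,
    show X 1 - (C m * X 0 + C k) = affineForm (-m) 1 (-k) by simp [affineForm]; ring] at hG
  refine ⟨G, ?_, hG⟩
  rcases eq_or_ne G 0 with rfl | hG0
  · simp
  · have := totalDegree_mul_affineForm hG0 (a := -m) (Or.inr one_ne_zero) (-k)
    rw [mul_comm, ← hG] at this
    omega

/-- A certificate, built by peeling off lines, that no nonzero polynomial of degree `≤ d`
vanishes on `A`. -/
inductive LinePeelable : ℕ → Set (ℝ × ℝ) → Prop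
  | point {A : Set (ℝ × ℝ)} (q : ℝ × ℝ) (hq : q ∈ A) : LinePeelable 0 A
  | line {d : ℕ} {A : Set (ℝ × ℝ)} (m k : ℝ) (s : Finset ℝ) (hs : d + 1 < s.card)
      (hsA : ∀ x ∈ s, (x, m * x + k) ∈ A)
      (hrest : LinePeelable d {q ∈ A | q.2 ≠ m * q.1 + k}) : LinePeelable (d + 1) A

theorem LinePeelable.eq_zero {d : ℕ} {A : Set (ℝ × ℝ)} (hA : LinePeelable d A)
    {F : MvPolynomial (Fin 2) ℝ} (hF : F.totalDegree ≤ d) (hFA : ∀ q ∈ A, pev F q = 0) :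
    F = 0 := by
  induction hA generalizing F with
  | point q hq =>
    rw [totalDegree_eq_zero_iff_eq_C.1 (Nat.le_zero.1 hF)] at hFA ⊢
    simpa [pev] using hFA q hq
  | line m k s hs hsA hrest ih =>
    obtain ⟨G, hG, rfl⟩ := exists_eq_affineForm_mul hF m k s hs fun x hx => hFA _ (hsA x hx)
    refine (ih hG fun q ⟨hqA, hq⟩ => ?_).symm ▸ mul_zero _
    have := hFA q hqA
    rw [pev_mul, pev_affineForm] at this
    refine (mul_eq_zero.1 this).resolve_left fun h => hq ?_
    linarith

lemma mul_eq_mul_of_lineSet_eq {a b c a' b' c' : ℝ} (hab : (a, b) ≠ (0, 0))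
    (h : lineSet a b c = lineSet a' b' c') : a * b' = a' * b := by
  have hn : a ^ 2 + b ^ 2 ≠ 0 := fun h0 => hab <| by
    rw [Prod.mk.injEq]; constructor <;> nlinarith [sq_nonneg a, sq_nonneg b]
  set t := -c / (a ^ 2 + b ^ 2)
  have ht : t * (a ^ 2 + b ^ 2) = -c := div_mul_cancel₀ _ hn
  have h₀ : (t * a, t * b) ∈ lineSet a b c := by
    show a * (t * a) + b * (t * b) + c = 0; linear_combination ht
  have h₁ : (t * a + b, t * b - a) ∈ lineSet a b c := by
    show a * (t * a + b) + b * (t * b - a) + c = 0; linear_combination ht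
  rw [h] at h₀ h₁
  change a' * (t * a) + b' * (t * b) + c' = 0 at h₀
  change a' * (t * a + b) + b' * (t * b - a) + c' = 0 at h₁
  linear_combination h₀ - h₁

theorem InvLine.normal_eq_zero {P Q : MvPolynomial (Fin 2) ℝ} {a b c : ℝ}
    (hab : (a, b) ≠ (0, 0)) (h : InvLine P Q (lineSet a b c)) :
    ∀ q ∈ lineSet a b c, a * pev P q + b * pev Q q = 0 := by
  obtain ⟨a', b', c', hab', hL, hv⟩ := h
  have hprop := mul_eq_mul_of_lineSet_eq hab hL
  intro q hq
  have hq' := hv q (hL ▸ hq)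
  by_cases ha' : a' = 0
  · have hb' : b' ≠ 0 := fun hb' => hab' (by simp [ha', hb'])
    apply mul_left_cancel₀ hb'
    linear_combination b * hq' + pev P q * hprop
  · apply mul_left_cancel₀ ha'
    linear_combination a * hq' - pev Q q * hprop

theorem InvLine.eval_eq_zero_of_mem_inter {P Q : MvPolynomial (Fin 2) ℝ} {a b c a' b' c' : ℝ}
    (h : InvLine P Q (lineSet a b c)) (h' : InvLine P Q (lineSet a' b' c'))
    (hdet : a * b' - a' * b ≠ 0) {q : ℝ × ℝ} (hq : q ∈ lineSet a b c)
    (hq' : q ∈ lineSet a' b' c') : pev P q = 0 ∧ pev Q q = 0 := by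
  have e := h.normal_eq_zero (fun h0 => hdet (by simp_all)) q hq
  have e' := h'.normal_eq_zero (fun h0 => hdet (by simp_all)) q hq'
  constructor
  · apply mul_left_cancel₀ hdet; linear_combination b' * e - b * e'
  · apply mul_left_cancel₀ hdet; linear_combination a * e' - a' * e

/-- `(x + c₁, y + c₂)` is the radial field centred at `(-c₁, -c₂)`, and `c = a * c₁ + b * c₂`
says that the centre lies on the line. -/
theorem invLine_mul_radial (G : MvPolynomial (Fin 2) ℝ) (c₁ c₂ : ℝ) {a b c : ℝ}
    (hab : (a, b) ≠ (0, 0)) (h : c = a * c₁ + b * c₂ ∨ ∀ q ∈ lineSet a b c, pev G q = 0) :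
    InvLine (G * affineForm 1 0 c₁) (G * affineForm 0 1 c₂) (lineSet a b c) := by
  refine ⟨a, b, c, hab, rfl, fun q hq => ?_⟩
  simp only [pev_mul, pev_affineForm]
  rcases h with hc | hG
  · change a * q.1 + b * q.2 + c = 0 at hq
    linear_combination pev G q * (hq - hc)
  · rw [hG q hq]; ring

namespace Ziegler2

/-- The product of the five lines of `Z₂` that miss the triple point `(-1/2, 0)`. -/
noncomputable def cofactor : MvPolynomial (Fin 2) ℝ :=
  affineForm 3 1 1 * affineForm 9 3 (-1) * affineForm 21 (-4) 7 * affineForm 19 4 1 *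
    affineForm 10 10 (-5)

lemma cofactor_ne_zero : cofactor ≠ 0 := by
  simp [cofactor, affineForm_ne_zero]

lemma totalDegree_cofactor : cofactor.totalDegree = 5 := by
  simp [cofactor, totalDegree_mul_of_isDomain, affineForm_ne_zero, totalDegree_affineForm]

theorem invLine_radial : ∀ L ∈ Ziegler2,
    InvLine (cofactor * affineForm 1 0 (1 / 2)) (cofactor * affineForm 0 1 0) L := by
  intro L hL
  simp only [Ziegler2, Finset.mem_insert, Finset.mem_singleton] at hL
  rcases hL with rfl | rfl | rfl | rfl | rfl | rfl | rfl | rfl <;>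
    refine invLine_mul_radial _ _ _ (by norm_num) ?_
  all_goals first
    | left; norm_num; done
    | right; intro q (hq : _ = 0)
      simp only [cofactor, pev_mul, pev_affineForm, hq, mul_zero, zero_mul]

def multiplePoints : Set (ℝ × ℝ) :=
  {(-1/2, 0), (-1/3, 0), (1/9, 0), (-1/19, 0), (1/2, 0), (-1/4, -1/4), (5/12, -11/12),
   (-9/25, -7/50), (1/15, -17/30), (-5/11, 4/11), (3/7, -16/7), (-3/4, 5/4), (-1/3, 4/3),
   (-9/11, -28/11), (-7/18, 8/9), (-17/99, 28/33), (-1/12, 7/12), (-1/5, 7/10)}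

theorem eval_eq_zero_of_mem_multiplePoints {P Q : MvPolynomial (Fin 2) ℝ}
    (h : ∀ L ∈ Ziegler2, InvLine P Q L) : ∀ q ∈ multiplePoints, pev P q = 0 ∧ pev Q q = 0 := by
  have h₀ := h (lineSet 0 1 0) (by simp [Ziegler2])
  have h₁ := h (lineSet 2 2 1) (by simp [Ziegler2])
  have h₂ := h (lineSet 3 1 1) (by simp [Ziegler2])
  have h₃ := h (lineSet 8 (-1) 4) (by simp [Ziegler2])
  have h₄ := h (lineSet 9 3 (-1)) (by simp [Ziegler2])
  have h₅ := h (lineSet 21 (-4) 7) (by simp [Ziegler2])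
  have h₆ := h (lineSet 19 4 1) (by simp [Ziegler2])
  have h₇ := h (lineSet 10 10 (-5)) (by simp [Ziegler2])
  simp only [multiplePoints, Set.mem_insert_iff, Set.mem_singleton_iff]
  rintro q (rfl | rfl | rfl | rfl | rfl | rfl | rfl | rfl | rfl | rfl | rfl | rfl | rfl | rfl |
    rfl | rfl | rfl | rfl)
  · refine h₀.eval_eq_zero_of_mem_inter h₁ ?_ ?_ ?_ <;> norm_num [lineSet]
  · refine h₀.eval_eq_zero_of_mem_inter h₂ ?_ ?_ ?_ <;> norm_num [lineSet]
  · refine h₀.eval_eq_zero_of_mem_inter h₄ ?_ ?_ ?_ <;> norm_num [lineSet]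
  · refine h₀.eval_eq_zero_of_mem_inter h₆ ?_ ?_ ?_ <;> norm_num [lineSet]
  · refine h₀.eval_eq_zero_of_mem_inter h₇ ?_ ?_ ?_ <;> norm_num [lineSet]
  · refine h₁.eval_eq_zero_of_mem_inter h₂ ?_ ?_ ?_ <;> norm_num [lineSet]
  · refine h₁.eval_eq_zero_of_mem_inter h₄ ?_ ?_ ?_ <;> norm_num [lineSet]
  · refine h₁.eval_eq_zero_of_mem_inter h₅ ?_ ?_ ?_ <;> norm_num [lineSet]
  · refine h₁.eval_eq_zero_of_mem_inter h₆ ?_ ?_ ?_ <;> norm_num [lineSet]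
  · refine h₂.eval_eq_zero_of_mem_inter h₃ ?_ ?_ ?_ <;> norm_num [lineSet]
  · refine h₂.eval_eq_zero_of_mem_inter h₆ ?_ ?_ ?_ <;> norm_num [lineSet]
  · refine h₂.eval_eq_zero_of_mem_inter h₇ ?_ ?_ ?_ <;> norm_num [lineSet]
  · refine h₃.eval_eq_zero_of_mem_inter h₄ ?_ ?_ ?_ <;> norm_num [lineSet]
  · refine h₃.eval_eq_zero_of_mem_inter h₅ ?_ ?_ ?_ <;> norm_num [lineSet]
  · refine h₃.eval_eq_zero_of_mem_inter h₇ ?_ ?_ ?_ <;> norm_num [lineSet]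
  · refine h₄.eval_eq_zero_of_mem_inter h₅ ?_ ?_ ?_ <;> norm_num [lineSet]
  · refine h₄.eval_eq_zero_of_mem_inter h₇ ?_ ?_ ?_ <;> norm_num [lineSet]
  · refine h₅.eval_eq_zero_of_mem_inter h₆ ?_ ?_ ?_ <;> norm_num [lineSet]

/- Each `Bᵢ` is the product of four lines of `Z₂` covering all but two multiple points and of the
line through those two. Of the points `(0, -1/4)`, `(0, -1)`, `(0, -1/2)`, on the lines
`19x + 4y + 1`, `3x + y + 1`, `2x + 2y + 1`, the `i`-th is a zero of `Bⱼ` exactly when `j ≠ i`. -/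

noncomputable def B₁ : MvPolynomial (Fin 2) ℝ :=
  affineForm 2 2 1 * affineForm 3 1 1 * affineForm 9 3 (-1) * affineForm 10 10 (-5) *
    affineForm (-133) 40 (-7)

noncomputable def B₂ : MvPolynomial (Fin 2) ℝ :=
  affineForm 2 2 1 * affineForm 21 (-4) 7 * affineForm 19 4 1 * affineForm 10 10 (-5) *
    affineForm 9 14 (-1)

noncomputable def B₃ : MvPolynomial (Fin 2) ℝ :=
  affineForm 3 1 1 * affineForm 8 (-1) 4 * affineForm 9 3 (-1) * affineForm 19 4 1 *
    affineForm (-14) 86 7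

lemma totalDegree_B_le : B₁.totalDegree ≤ 5 ∧ B₂.totalDegree ≤ 5 ∧ B₃.totalDegree ≤ 5 := by
  simp [B₁, B₂, B₃, totalDegree_mul_of_isDomain, affineForm_ne_zero, totalDegree_affineForm]

lemma eval_B_eq_zero_of_mem_multiplePoints :
    ∀ q ∈ multiplePoints, pev B₁ q = 0 ∧ pev B₂ q = 0 ∧ pev B₃ q = 0 := by
  simp only [multiplePoints, Set.mem_insert_iff, Set.mem_singleton_iff]
  rintro q (rfl | rfl | rfl | rfl | rfl | rfl | rfl | rfl | rfl | rfl | rfl | rfl | rfl | rfl |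
    rfl | rfl | rfl | rfl) <;> norm_num [B₁, B₂, B₃]

set_option maxHeartbeats 1000000 in
lemma linePeelable :
    LinePeelable 5 (insert (0, -1/4) (insert (0, -1) (insert (0, -1/2) multiplePoints))) := by
  refine .line (-1) (-1/2) {-1/2, -1/4, 5/12, -9/25, 1/15, 0}
    (by norm_num [Finset.card_insert_of_notMem]) (by norm_num [multiplePoints]) ?_
  refine .line (-3) (-1) {-1/3, -5/11, 3/7, -3/4, 0}
    (by norm_num [Finset.card_insert_of_notMem]) (by norm_num [multiplePoints]) ?_
  refine .line (-3) (1/3) {1/9, -1/3, -17/99, -1/12}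
    (by norm_num [Finset.card_insert_of_notMem]) (by norm_num [multiplePoints]) ?_
  refine .line (-19/4) (-1/4) {-1/19, -1/5, 0}
    (by norm_num [Finset.card_insert_of_notMem]) (by norm_num [multiplePoints]) ?_
  refine .line 8 4 {-9/11, -7/18}
    (by norm_num [Finset.card_insert_of_notMem]) (by norm_num [multiplePoints]) ?_
  exact .point (1/2, 0) (by norm_num [multiplePoints])

theorem exists_eq_combination {F : MvPolynomial (Fin 2) ℝ} (hF : F.totalDegree ≤ 5)
    (hS : ∀ q ∈ multiplePoints, pev F q = 0) : ∃ u v w : ℝ, F = u • B₁ + v • B₂ + w • B₃ := by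
  refine ⟨pev F (0, -1/4) / pev B₁ (0, -1/4), pev F (0, -1) / pev B₂ (0, -1),
    pev F (0, -1/2) / pev B₃ (0, -1/2), sub_eq_zero.1 (linePeelable.eq_zero ?_ ?_)⟩
  · obtain ⟨h₁, h₂, h₃⟩ := totalDegree_B_le
    simp only [← mem_restrictTotalDegree] at hF h₁ h₂ h₃ ⊢
    exact sub_mem hF (add_mem (add_mem (Submodule.smul_mem _ _ h₁) (Submodule.smul_mem _ _ h₂))
      (Submodule.smul_mem _ _ h₃))
  · rintro q (rfl | rfl | rfl | hq)
    iterate 3 · norm_num [B₁, B₂, B₃] <;> ring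
    · obtain ⟨h₁, h₂, h₃⟩ := eval_B_eq_zero_of_mem_multiplePoints q hq
      simp [hS q hq, h₁, h₂, h₃]

theorem combination_coeffs_eq_zero {u₁ u₂ u₃ v₁ v₂ v₃ : ℝ}
    (h : ∀ L ∈ Ziegler2, InvLine (u₁ • B₁ + u₂ • B₂ + u₃ • B₃) (v₁ • B₁ + v₂ • B₂ + v₃ • B₃) L) :
    u₁ = 0 ∧ u₂ = 0 ∧ u₃ = 0 ∧ v₁ = 0 ∧ v₂ = 0 ∧ v₃ = 0 := by
  have e₁ := (h (lineSet 19 4 1) (by simp [Ziegler2])).normal_eq_zero (by norm_num) (0, -1/4)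
    (by norm_num [lineSet])
  have e₂ := (h (lineSet 3 1 1) (by simp [Ziegler2])).normal_eq_zero (by norm_num) (0, -1)
    (by norm_num [lineSet])
  have e₃ := (h (lineSet 2 2 1) (by simp [Ziegler2])).normal_eq_zero (by norm_num) (0, -1/2)
    (by norm_num [lineSet])
  have e₄ := (h (lineSet 0 1 0) (by simp [Ziegler2])).normal_eq_zero (by norm_num) (0, 0)
    (by norm_num [lineSet])
  have e₅ := (h (lineSet 8 (-1) 4) (by simp [Ziegler2])).normal_eq_zero (by norm_num) (0, 4)
    (by norm_num [lineSet])
  have e₆ := (h (lineSet 21 (-4) 7) (by simp [Ziegler2])).normal_eq_zero (by norm_num) (0, 7/4)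
    (by norm_num [lineSet])
  norm_num [B₁, B₂, B₃] at e₁ e₂ e₃ e₄ e₅ e₆
  refine ⟨?_, ?_, ?_, ?_, ?_, ?_⟩ <;> linarith

end Ziegler2

/-- **Proposition.** For the perturbed Ziegler arrangement `Z₂`: every polynomial
vector field `(P, Q)` with `deg P ≤ 5`, `deg Q ≤ 5` fixing every line of `Z₂` is
zero (`D_i(Z₂) = ∅` for `1 ≤ i ≤ 5`), and there is a nonzero polynomial vector
field of degree `6` fixing every line of `Z₂` (`D_6(Z₂) ≠ ∅`). -/
theorem ziegler2_derivations :
    (∀ P Q : MvPolynomial (Fin 2) ℝ, P.totalDegree ≤ 5 → Q.totalDegree ≤ 5 →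
        (∀ L ∈ Ziegler2, InvLine P Q L) → P = 0 ∧ Q = 0) ∧
    (∃ P Q : MvPolynomial (Fin 2) ℝ, (P ≠ 0 ∨ Q ≠ 0) ∧
        max P.totalDegree Q.totalDegree = 6 ∧ ∀ L ∈ Ziegler2, InvLine P Q L) := by
  refine ⟨fun P Q hP hQ hinv => ?_, ?_⟩
  · have hS := Ziegler2.eval_eq_zero_of_mem_multiplePoints hinv
    obtain ⟨u₁, u₂, u₃, rfl⟩ := Ziegler2.exists_eq_combination hP fun q hq => (hS q hq).1
    obtain ⟨v₁, v₂, v₃, rfl⟩ := Ziegler2.exists_eq_combination hQ fun q hq => (hS q hq).2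
    obtain ⟨rfl, rfl, rfl, rfl, rfl, rfl⟩ := Ziegler2.combination_coeffs_eq_zero hinv
    simp
  · refine ⟨_, _, Or.inl ?_, ?_, Ziegler2.invLine_radial⟩
    · exact mul_ne_zero Ziegler2.cofactor_ne_zero (affineForm_ne_zero (by norm_num) _)
    · rw [totalDegree_mul_affineForm Ziegler2.cofactor_ne_zero (by norm_num),
        totalDegree_mul_affineForm Ziegler2.cofactor_ne_zero (by norm_num),
        Ziegler2.totalDegree_cofactor]
      rfl
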